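/- arXiv:1902.02008 — 3 statements merged into one kernel-verified Lean document; each statement's English description precedes it below -/
import Mathlib

section
/- Let n ≥ 2 and ℓ ≥ 1 be fixed integers and let 𝓕 be any set of degree-n fields. Suppose there exist a real number α ≥ 1, a strictly increasing unbounded sequence of real exponents k_1 < k_2 < ⋯ (k_j → ∞), and for each j a finite constant c_j > 0, such that for all real X ≥ 1 one has ∑_{K ∈ 𝓕(X)} |Cl_K[ℓ]|^{k_j} ≤ c_j · |𝓕(X)|^α. Then for every ε > 0 there exists a constant c_ε > 0 (depending on ε, n, ℓ, α and the family 𝓕) such that every field K ∈ 𝓕 satisfies |Cl_K[ℓ]| ≤ c_ε · D_K^ε. -/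
open NumberField Filter

-- The absolute value of the discriminant of an intermediate field `K` of `ℚ̄/ℚ`
-- (junk value `0` in the irrelevant case that `K/ℚ` is infinite-dimensional).
open scoped Classical in
noncomputable def absDisc (K : IntermediateField ℚ (AlgebraicClosure ℚ)) : ℕ :=
  if h : FiniteDimensional ℚ K then
    letI : NumberField K := { to_charZero := inferInstance, to_finiteDimensional := h }
    (NumberField.discr K).natAbs
  else 0

/-- The cardinality `|Cl_K[m]|` of the `m`-torsion subgroup of the class group of `K`. -/
noncomputable def clTors (K : IntermediateField ℚ (AlgebraicClosure ℚ)) (m : ℕ) : ℕ :=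
  Nat.card {x : ClassGroup (𝓞 K) // x ^ m = 1}

/-! Moment bounds `∑_{K ∈ 𝓕(X)} |Cl_K[ℓ]|^k ≤ c · |𝓕(X)|^α` are applied with `X = D_K`, where a
single term of the sum already bounds `|Cl_K[ℓ]|^k`. Hermite's method (a primitive integral element
of small height, whose minimal polynomial has degree `n` and coefficients polynomial in `D_K`)
counts `|𝓕(X)| ≪ X^A` for some `A` depending on `n` only. Hence `|Cl_K[ℓ]| ≪ D_K^{Aα/k}`, and
`k → ∞` makes the exponent smaller than any `ε`. -/

open Module
open scoped Finset IntermediateField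

section Moments

variable {ι : Type*} {S : Set ι} {D t : ι → ℝ}

lemma le_finsum_mem_of_mem {M : Type*} [AddCommMonoid M] [PartialOrder M] [IsOrderedAddMonoid M]
    {s : Set ι} {f : ι → M} (hs : s.Finite) (hf : ∀ i ∈ s, 0 ≤ f i)
    {i : ι} (hi : i ∈ s) : f i ≤ ∑ᶠ j ∈ s, f j := by
  rw [finsum_mem_eq_finite_toFinset_sum f hs]
  exact Finset.single_le_sum (fun j hj => hf j (hs.mem_toFinset.mp hj)) (hs.mem_toFinset.mpr hi)

lemma le_mul_rpow_of_moment_le {α C A k c : ℝ} (ht : ∀ i, 0 ≤ t i) (hD : ∀ i ∈ S, 1 ≤ D i)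
    (hα : 0 ≤ α) (hk : 0 < k) (hc : 0 ≤ c) (hC : 0 ≤ C)
    (hcount : ∀ X, 1 ≤ X → {i ∈ S | D i ≤ X}.Finite ∧ ({i ∈ S | D i ≤ X}.ncard : ℝ) ≤ C * X ^ A)
    (hmom : ∀ X, 1 ≤ X →
      ∑ᶠ i ∈ {i ∈ S | D i ≤ X}, t i ^ k ≤ c * ({i ∈ S | D i ≤ X}.ncard : ℝ) ^ α)
    {i : ι} (hi : i ∈ S) : t i ≤ (c * C ^ α) ^ k⁻¹ * D i ^ (A * α * k⁻¹) := by
  have hD0 : 0 ≤ D i := zero_le_one.trans (hD i hi)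
  obtain ⟨hfin, hcard⟩ := hcount (D i) (hD i hi)
  have hmoment : t i ^ k ≤ c * (C * D i ^ A) ^ α := calc
    t i ^ k ≤ ∑ᶠ j ∈ {j ∈ S | D j ≤ D i}, t j ^ k :=
      le_finsum_mem_of_mem hfin (fun j _ => Real.rpow_nonneg (ht j) k) ⟨hi, le_rfl⟩
    _ ≤ c * ({j ∈ S | D j ≤ D i}.ncard : ℝ) ^ α := hmom (D i) (hD i hi)
    _ ≤ c * (C * D i ^ A) ^ α := by gcongr
  calc t i ≤ (c * (C * D i ^ A) ^ α) ^ k⁻¹ :=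
        (Real.le_rpow_inv_iff_of_pos (ht i) (by positivity) hk).mpr hmoment
    _ = (c * C ^ α) ^ k⁻¹ * D i ^ (A * α * k⁻¹) := by
        rw [Real.mul_rpow hC (by positivity), ← Real.rpow_mul hD0, ← mul_assoc,
          Real.mul_rpow (by positivity) (by positivity), ← Real.rpow_mul hD0]

lemma le_mul_rpow_of_moments_le {α C A : ℝ} {k c : ℕ → ℝ} (ht : ∀ i, 0 ≤ t i)
    (hD : ∀ i ∈ S, 1 ≤ D i) (hα : 0 ≤ α) (hk : Tendsto k atTop atTop) (hc : ∀ j, 0 < c j)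
    (hC : 0 < C)
    (hcount : ∀ X, 1 ≤ X → {i ∈ S | D i ≤ X}.Finite ∧ ({i ∈ S | D i ≤ X}.ncard : ℝ) ≤ C * X ^ A)
    (hmom : ∀ j, ∀ X, 1 ≤ X →
      ∑ᶠ i ∈ {i ∈ S | D i ≤ X}, t i ^ k j ≤ c j * ({i ∈ S | D i ≤ X}.ncard : ℝ) ^ α)
    (ε : ℝ) (hε : 0 < ε) : ∃ cε : ℝ, 0 < cε ∧ ∀ i ∈ S, t i ≤ cε * D i ^ ε := by
  obtain ⟨j, hkj, hkjε⟩ :=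
    ((hk.eventually_gt_atTop 0).and (hk.eventually_ge_atTop (A * α / ε))).exists
  have hexp : A * α * (k j)⁻¹ ≤ ε := by
    rw [← div_eq_mul_inv, div_le_iff₀ hkj]
    linarith [(div_le_iff₀ hε).mp hkjε]
  have hcj := hc j
  refine ⟨(c j * C ^ α) ^ (k j)⁻¹, by positivity, fun i hi => ?_⟩
  calc t i ≤ (c j * C ^ α) ^ (k j)⁻¹ * D i ^ (A * α * (k j)⁻¹) :=
        le_mul_rpow_of_moment_le ht hD hα hkj hcj.le hC.le hcount (hmom j) hi
    _ ≤ (c j * C ^ α) ^ (k j)⁻¹ * D i ^ ε := by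
        gcongr
        exact hD i hi

end Moments

namespace Polynomial

open scoped Classical in
noncomputable def boundedIntPolys (n C : ℕ) : Finset ℤ[X] :=
  (Fintype.piFinset fun _ : Fin (n + 1) => Finset.Icc (-(C : ℤ)) C).image
    fun c : Fin (n + 1) → ℤ => ∑ i, Polynomial.C (c i) * X ^ (i : ℕ)

lemma mem_boundedIntPolys {n C : ℕ} {p : ℤ[X]} (hdeg : p.natDegree ≤ n)
    (hcoeff : ∀ i, |p.coeff i| ≤ C) : p ∈ boundedIntPolys n C := by
  classical
  refine Finset.mem_image.mpr ⟨fun i => p.coeff i, ?_, ?_⟩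
  · exact Fintype.mem_piFinset.mpr fun i => Finset.mem_Icc.mpr (abs_le.mp (hcoeff i))
  · simp only [C_mul_X_pow_eq_monomial]
    rw [Fin.sum_univ_eq_sum_range (fun i => monomial i (p.coeff i)), ← as_sum_range' p (n + 1)
      (Nat.lt_succ_of_le hdeg)]

lemma natDegree_le_of_mem_boundedIntPolys {n C : ℕ} {p : ℤ[X]} (hp : p ∈ boundedIntPolys n C) :
    p.natDegree ≤ n := by
  classical
  obtain ⟨c, -, rfl⟩ := Finset.mem_image.mp hp
  exact natDegree_sum_le_of_forall_le _ _ fun i _ =>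
    (natDegree_C_mul_X_pow_le (c i) i).trans (Nat.lt_succ_iff.mp i.2)

lemma card_boundedIntPolys_le (n C : ℕ) : #(boundedIntPolys n C) ≤ (2 * C + 1) ^ (n + 1) := by
  classical
  refine Finset.card_image_le.trans ?_
  rw [Fintype.card_piFinset, Finset.prod_const, Finset.card_univ, Fintype.card_fin, Int.card_Icc,
    show (C : ℤ) + 1 - -C = ((2 * C + 1 : ℕ) : ℤ) by push_cast; ring, Int.toNat_natCast]

open scoped Classical in
noncomputable def boundedIntPolysRoots (A : Type*) [CommRing A] [IsDomain A] (n C : ℕ) :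
    Finset A :=
  (boundedIntPolys n C).biUnion fun p => (p.aroots A).toFinset

variable {A : Type*} [CommRing A] [IsDomain A]

lemma mem_boundedIntPolysRoots [CharZero A] {n C : ℕ} {p : ℤ[X]} {x : A}
    (hp : p ∈ boundedIntPolys n C) (hp0 : p ≠ 0) (hx : aeval x p = 0) :
    x ∈ boundedIntPolysRoots A n C := by
  classical
  exact Finset.mem_biUnion.mpr ⟨p, hp, Multiset.mem_toFinset.mpr (mem_aroots.mpr ⟨hp0, hx⟩)⟩

lemma card_boundedIntPolysRoots_le (n C : ℕ) :
    #(boundedIntPolysRoots A n C) ≤ (2 * C + 1) ^ (n + 1) * n := by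
  classical
  calc #(boundedIntPolysRoots A n C) ≤ ∑ p ∈ boundedIntPolys n C, #(p.aroots A).toFinset :=
        Finset.card_biUnion_le
    _ ≤ ∑ _p ∈ boundedIntPolys n C, n := Finset.sum_le_sum fun p hp =>
        (Multiset.toFinset_card_le _).trans <| (card_roots' _).trans <|
          natDegree_map_le.trans (natDegree_le_of_mem_boundedIntPolys hp)
    _ ≤ (2 * C + 1) ^ (n + 1) * n := by
        rw [Finset.sum_const, smul_eq_mul]
        gcongr
        exact card_boundedIntPolys_le n C

end Polynomial

namespace NumberField

open InfinitePlace mixedEmbedding Polynomial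

namespace hermiteTheorem

lemma two_pow_rankOfDiscrBdd_le {N : ℕ} (hN : 1 ≤ N) : (2 : ℝ) ^ rankOfDiscrBdd N ≤ 3 * N := by
  have hN' : (1 : ℝ) ≤ N := by exact_mod_cast hN
  have hbase : (2 : ℝ) ≤ 3 * Real.pi / 4 := by linarith [Real.pi_gt_three]
  set v := Real.log (9 / 4 * N) / Real.log (3 * Real.pi / 4) with hv_def
  have hv : 0 ≤ v := div_nonneg (Real.log_nonneg (by linarith))
    (Real.log_nonneg (by linarith))
  rcases max_choice 1 ⌊v⌋₊ with h | h <;> rw [rankOfDiscrBdd, h]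
  · linarith
  · calc (2 : ℝ) ^ ⌊v⌋₊ = 2 ^ (⌊v⌋₊ : ℝ) := (Real.rpow_natCast 2 _).symm
      _ ≤ 2 ^ v := Real.rpow_le_rpow_of_exponent_le one_le_two (Nat.floor_le hv)
      _ ≤ (3 * Real.pi / 4) ^ v := Real.rpow_le_rpow zero_le_two hbase hv
      _ = 9 / 4 * N := by
        rw [hv_def, Real.log_div_log, Real.rpow_logb (by linarith) (by linarith) (by linarith)]
      _ ≤ 3 * N := by linarith

lemma boundOfDiscBdd_add_one_le {N : ℕ} (hN : 1 ≤ N) :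
    (boundOfDiscBdd N : ℝ) + 1 ≤ 5 * N ^ 2 := by
  have hN' : (1 : ℝ) ≤ N := by exact_mod_cast hN
  have hsqrt : Real.sqrt N ≤ N := Real.sqrt_le_self_iff.mpr (Or.inr hN')
  have h2 := two_pow_rankOfDiscrBdd_le hN
  push_cast [boundOfDiscBdd, Real.coe_sqrt]
  nlinarith [Real.sqrt_nonneg N]

variable {K : Type*} [Field K] [NumberField K]

lemma exists_primitive_element_le_boundOfDiscBdd {N : ℕ} (hK : |discr K| ≤ N) :
    ∃ a : 𝓞 K, ℚ⟮(a : K)⟯ = ⊤ ∧ ∀ w : InfinitePlace K, w a ≤ boundOfDiscBdd N + 1 := by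
  set B := boundOfDiscBdd N
  have hB : (0 : ℝ) ≤ B := B.coe_nonneg
  have hmink := minkowskiBound_lt_boundOfDiscBdd hK
  obtain ⟨w₀⟩ := (inferInstance : Nonempty (InfinitePlace K))
  rcases isReal_or_isComplex w₀ with hw₀ | hw₀
  · have hlt : minkowskiBound K 1 < convexBodyLTFactor K * B :=
      hmink.trans_le (le_mul_of_one_le_left' (mod_cast one_le_convexBodyLTFactor K))
    obtain ⟨a, hgen, ha⟩ := exists_primitive_element_lt_of_isReal K hw₀ hlt
    refine ⟨a, hgen, fun w => (ha w).le.trans ?_⟩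
    rw [NNReal.coe_max, NNReal.coe_one]
    exact max_le (by linarith) (by linarith)
  · have hlt : minkowskiBound K 1 < convexBodyLT'Factor K * B :=
      hmink.trans_le (le_mul_of_one_le_left' (mod_cast one_le_convexBodyLT'Factor K))
    obtain ⟨a, hgen, ha⟩ := exists_primitive_element_lt_of_isComplex K hw₀ hlt
    refine ⟨a, hgen, fun w => (ha w).le.trans ?_⟩
    rw [Real.sqrt_le_left (by linarith)]
    nlinarith

end hermiteTheorem

open hermiteTheorem

variable {K : Type*} [Field K] [NumberField K]

lemma abs_coeff_minpoly_le {a : 𝓞 K} {B : ℝ} (hB : 1 ≤ B)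
    (ha : ∀ w : InfinitePlace K, w a ≤ B) (i : ℕ) :
    |((minpoly ℤ (a : K)).coeff i : ℝ)| ≤
      B ^ finrank ℚ K * (finrank ℚ K).choose (finrank ℚ K / 2) := by
  have hcoeff := Embeddings.coeff_bdd_of_norm_le ((le_iff_le (a : K) B).mp ha) i
  rwa [max_eq_left hB, minpoly.isIntegrallyClosed_eq_field_fractions' ℚ a.isIntegral_coe,
    coeff_map, eq_intCast, Int.norm_cast_rat, Int.norm_eq_abs] at hcoeff

lemma exists_primitive_element_abs_coeff_minpoly_le {N : ℕ} (hK : |discr K| ≤ N) :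
    ∃ a : 𝓞 K, ℚ⟮(a : K)⟯ = ⊤ ∧
      ∀ i, |(minpoly ℤ (a : K)).coeff i| ≤ ((10 * N ^ 2) ^ finrank ℚ K : ℕ) := by
  set n := finrank ℚ K
  have hN : 1 ≤ N := by
    have : (1 : ℤ) ≤ N := (Int.one_le_abs (discr_ne_zero K)).trans hK
    exact_mod_cast this
  obtain ⟨a, hgen, ha⟩ := exists_primitive_element_le_boundOfDiscBdd hK
  refine ⟨a, hgen, fun i => ?_⟩
  have hB := boundOfDiscBdd_add_one_le hN
  have hchoose : (n.choose (n / 2) : ℝ) ≤ 2 ^ n := mod_cast Nat.choose_le_two_pow n _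
  have : |((minpoly ℤ (a : K)).coeff i : ℝ)| ≤ (((10 * N ^ 2) ^ n : ℕ) : ℝ) := calc
    _ ≤ ((boundOfDiscBdd N : ℝ) + 1) ^ n * n.choose (n / 2) :=
      abs_coeff_minpoly_le (by linarith [(boundOfDiscBdd N).coe_nonneg]) ha i
    _ ≤ (5 * N ^ 2) ^ n * 2 ^ n := by gcongr
    _ = (((10 * N ^ 2) ^ n : ℕ) : ℝ) := by push_cast; rw [← mul_pow]; ring
  exact_mod_cast this

lemma exists_mem_boundedIntPolysRoots_eq_adjoin {A : Type*} [Field A] [CharZero A]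
    (F : IntermediateField ℚ A) [NumberField F] {N : ℕ} (hF : |discr F| ≤ N) :
    ∃ x ∈ boundedIntPolysRoots A (finrank ℚ F) ((10 * N ^ 2) ^ finrank ℚ F), F = ℚ⟮x⟯ := by
  obtain ⟨a, hgen, hcoeff⟩ := exists_primitive_element_abs_coeff_minpoly_le hF
  have hint := a.isIntegral_coe
  have hdeg : (minpoly ℤ (a : F)).natDegree ≤ finrank ℚ F := by
    rw [← (minpoly.monic hint).natDegree_map (algebraMap ℤ ℚ),
      ← minpoly.isIntegrallyClosed_eq_field_fractions' ℚ hint]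
    exact minpoly.natDegree_le _
  refine ⟨(a : F), mem_boundedIntPolysRoots (mem_boundedIntPolys hdeg hcoeff)
    (minpoly.ne_zero hint) ?_, ?_⟩
  · exact (aeval_algebraMap_eq_zero_iff_of_injective (algebraMap F A).injective).mpr
      (minpoly.aeval ℤ _)
  -- `hgen` is stated for the generic `ℚ`-algebra structure of a field of characteristic zero,
  -- which is only propositionally equal to `F.algebra'`.
  · have h : IntermediateField.lift (F := F) ⊤ = IntermediateField.lift (F := F) ℚ⟮(a : F)⟯ := by
      congr 1; convert hgen.symm <;> exact Subsingleton.elim _ _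
    rwa [IntermediateField.lift_top, IntermediateField.lift_adjoin_simple] at h

end NumberField

lemma absDisc_eq_natAbs_discr (K : IntermediateField ℚ (AlgebraicClosure ℚ)) [NumberField K] :
    absDisc K = (discr K).natAbs := by
  rw [absDisc, dif_pos (inferInstance : FiniteDimensional ℚ K)]

lemma one_le_absDisc (K : IntermediateField ℚ (AlgebraicClosure ℚ)) [NumberField K] :
    1 ≤ absDisc K := by
  rw [absDisc_eq_natAbs_discr]
  exact Int.natAbs_pos.mpr (discr_ne_zero K)

section DegreeNFields

open Polynomial

variable {𝓕 : Set (IntermediateField ℚ (AlgebraicClosure ℚ))} {n : ℕ}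

lemma setOf_absDisc_le_subset_image_adjoin (hn : 0 < n) (h𝓕 : ∀ K ∈ 𝓕, finrank ℚ K = n)
    (N : ℕ) :
    {K ∈ 𝓕 | absDisc K ≤ N} ⊆
      (fun x => ℚ⟮x⟯) '' boundedIntPolysRoots (AlgebraicClosure ℚ) n ((10 * N ^ 2) ^ n) := by
  rintro K ⟨hK𝓕, hKN⟩
  have : NumberField K := { to_finiteDimensional := finite_of_finrank_pos (h𝓕 K hK𝓕 ▸ hn) }
  have hdiscr : |discr K| ≤ N := by
    rw [Int.abs_eq_natAbs, ← absDisc_eq_natAbs_discr]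
    exact_mod_cast hKN
  obtain ⟨x, hx, rfl⟩ := exists_mem_boundedIntPolysRoots_eq_adjoin K hdiscr
  exact ⟨x, h𝓕 _ hK𝓕 ▸ hx, rfl⟩

lemma finite_setOf_absDisc_le_and_ncard_le (hn : 0 < n) (h𝓕 : ∀ K ∈ 𝓕, finrank ℚ K = n)
    {N : ℕ} (hN : 1 ≤ N) :
    {K ∈ 𝓕 | absDisc K ≤ N}.Finite ∧ {K ∈ 𝓕 | absDisc K ≤ N}.ncard ≤
      3 ^ (n + 1) * 10 ^ (n * (n + 1)) * n * N ^ (2 * n * (n + 1)) := by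
  set roots : Set (AlgebraicClosure ℚ) :=
    ↑(boundedIntPolysRoots (AlgebraicClosure ℚ) n ((10 * N ^ 2) ^ n))
  have hsub := setOf_absDisc_le_subset_image_adjoin hn h𝓕 N
  have hfin : ((fun x => ℚ⟮x⟯) '' roots).Finite := (Finset.finite_toSet _).image _
  refine ⟨hfin.subset hsub, ?_⟩
  have hM : 1 ≤ (10 * N ^ 2) ^ n := Nat.one_le_pow _ _ (by positivity)
  calc {K ∈ 𝓕 | absDisc K ≤ N}.ncard ≤ ((fun x => ℚ⟮x⟯) '' roots).ncard :=
        Set.ncard_le_ncard hsub hfin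
    _ ≤ roots.ncard := Set.ncard_image_le (Finset.finite_toSet _)
    _ = #(boundedIntPolysRoots (AlgebraicClosure ℚ) n ((10 * N ^ 2) ^ n)) :=
        Set.ncard_coe_finset _
    _ ≤ (2 * (10 * N ^ 2) ^ n + 1) ^ (n + 1) * n := card_boundedIntPolysRoots_le _ _
    _ ≤ (3 * (10 * N ^ 2) ^ n) ^ (n + 1) * n := by gcongr; omega
    _ = 3 ^ (n + 1) * 10 ^ (n * (n + 1)) * n * N ^ (2 * n * (n + 1)) := by ring

lemma exists_ncard_setOf_absDisc_le_le_mul_rpow (hn : 0 < n) (h𝓕 : ∀ K ∈ 𝓕, finrank ℚ K = n) :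
    ∃ C : ℝ, 0 < C ∧ ∃ A : ℝ, ∀ X : ℝ, 1 ≤ X → {K ∈ 𝓕 | (absDisc K : ℝ) ≤ X}.Finite ∧
      ({K ∈ 𝓕 | (absDisc K : ℝ) ≤ X}.ncard : ℝ) ≤ C * X ^ A := by
  refine ⟨3 ^ (n + 1) * 10 ^ (n * (n + 1)) * n, by positivity, (2 * n * (n + 1) : ℕ),
    fun X hX => ?_⟩
  have hX0 : 0 ≤ X := zero_le_one.trans hX
  have hset : {K ∈ 𝓕 | (absDisc K : ℝ) ≤ X} = {K ∈ 𝓕 | absDisc K ≤ ⌊X⌋₊} := by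
    ext K
    simp only [Set.mem_ofPred_eq, Nat.le_floor_iff hX0]
  obtain ⟨hfin, hcard⟩ :=
    finite_setOf_absDisc_le_and_ncard_le hn h𝓕 ((Nat.one_le_floor_iff X).mpr hX)
  rw [hset, Real.rpow_natCast]
  refine ⟨hfin, ?_⟩
  calc ({K ∈ 𝓕 | absDisc K ≤ ⌊X⌋₊}.ncard : ℝ)
      ≤ 3 ^ (n + 1) * 10 ^ (n * (n + 1)) * n * (⌊X⌋₊ : ℝ) ^ (2 * n * (n + 1)) := by
        exact_mod_cast hcard
    _ ≤ 3 ^ (n + 1) * 10 ^ (n * (n + 1)) * n * X ^ (2 * n * (n + 1)) := by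
        gcongr
        exact Nat.floor_le hX0

end DegreeNFields

theorem moments_imply_pointwise_torsion_bound_general
    (n ℓ : ℕ) (hn : 2 ≤ n)
    (𝓕 : Set (IntermediateField ℚ (AlgebraicClosure ℚ)))
    (h𝓕 : ∀ K ∈ 𝓕, Module.finrank ℚ K = n)
    (α : ℝ) (hα : 1 ≤ α)
    (k : ℕ → ℝ)
    (hktop : Tendsto k atTop atTop)
    (c : ℕ → ℝ) (hc : ∀ j, 0 < c j)
    (hmom : ∀ j : ℕ, ∀ X : ℝ, 1 ≤ X →
      ∑ᶠ K ∈ {K ∈ 𝓕 | (absDisc K : ℝ) ≤ X}, (clTors K ℓ : ℝ) ^ (k j)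
        ≤ c j * (({K ∈ 𝓕 | (absDisc K : ℝ) ≤ X}).ncard : ℝ) ^ α) :
    ∀ ε : ℝ, 0 < ε → ∃ cε : ℝ, 0 < cε ∧
      ∀ K ∈ 𝓕, (clTors K ℓ : ℝ) ≤ cε * (absDisc K : ℝ) ^ ε := by
  obtain ⟨C, hC, A, hcount⟩ := exists_ncard_setOf_absDisc_le_le_mul_rpow (by omega) h𝓕
  have hD : ∀ K ∈ 𝓕, (1 : ℝ) ≤ absDisc K := fun K hK => by
    have : NumberField K := { to_finiteDimensional := finite_of_finrank_pos (by rw [h𝓕 K hK]; omega) }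
    exact_mod_cast one_le_absDisc K
  exact le_mul_rpow_of_moments_le (fun K => Nat.cast_nonneg (clTors K ℓ)) hD (by linarith) hktop
    hc hC hcount hmom

/-- If for some `α ≥ 1` and an unbounded strictly increasing sequence of
exponents `k_j` the `k_j`-th moments of `|Cl_K[ℓ]|` over `𝓕(X)` are bounded by
`c_j · |𝓕(X)|^α`, then `|Cl_K[ℓ]| ≪_ε D_K^ε` for every field `K ∈ 𝓕`. -/
theorem moments_imply_pointwise_torsion_bound
    (n ℓ : ℕ) (hn : 2 ≤ n) (hℓ : 1 ≤ ℓ)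
    (𝓕 : Set (IntermediateField ℚ (AlgebraicClosure ℚ)))
    (h𝓕 : ∀ K ∈ 𝓕, Module.finrank ℚ K = n)
    (α : ℝ) (hα : 1 ≤ α)
    (k : ℕ → ℝ) (hkmono : StrictMono k)
    (hktop : Tendsto k atTop atTop)
    (c : ℕ → ℝ) (hc : ∀ j, 0 < c j)
    (hmom : ∀ j : ℕ, ∀ X : ℝ, 1 ≤ X →
      ∑ᶠ K ∈ {K ∈ 𝓕 | (absDisc K : ℝ) ≤ X}, (clTors K ℓ : ℝ) ^ (k j)
        ≤ c j * (({K ∈ 𝓕 | (absDisc K : ℝ) ≤ X}).ncard : ℝ) ^ α) :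
    ∀ ε : ℝ, 0 < ε → ∃ cε : ℝ, 0 < cε ∧
      ∀ K ∈ 𝓕, (clTors K ℓ : ℝ) ≤ cε * (absDisc K : ℝ) ^ ε :=
  moments_imply_pointwise_torsion_bound_general n ℓ hn 𝓕 h𝓕 α hα k hktop c hc hmom
end

section
/- Let K be an imaginary quadratic field with D = D_K the absolute value of its discriminant, and let ℓ be an odd prime. Let p_1, …, p_M be distinct rational primes such that for each j: p_j does not divide 2D, p_j < (1/4)·D^{1/(2ℓ)}, and p_j splits in K, i.e. p_j·𝓞_K = 𝔭_j·𝔭_j' for two distinct prime ideals 𝔭_j ≠ 𝔭_j' of the ring of integers 𝓞_K. Then M · |Cl_K[ℓ]| ≤ |Cl_K|. -/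
/-!
If `[𝔭ᵢ]^ℓ = [𝔭ⱼ]^ℓ` for some `i ≠ j`, then `(𝔭ᵢ 𝔭ⱼ')^ℓ = (α)` is principal with
`N(α) = (pᵢ pⱼ)^ℓ`. Since `ℓ` is odd this norm is not a square, so `α ∉ ℚ`. Then `1, α` span a
sublattice of `𝓞_K` whose discriminant `-4 (Im ψ(α))²` (for a complex embedding `ψ`) is a nonzero
square multiple of `disc K`, whence `D ≤ 4 |ψ(α)|² = 4 (pᵢ pⱼ)^ℓ < D`. So `j ↦ [𝔭ⱼ]^ℓ` is injective:
the classes `[𝔭ⱼ]` lie in distinct cosets of `Cl_K[ℓ]`.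
-/

open NumberField Filter

open Module Ideal
open scoped nonZeroDivisors

theorem card_mul_card_pow_eq_one_le {G ι : Type*} [CommGroup G] [Finite G] {n : ℕ} (u : ι → G)
    (hu : Function.Injective fun i => u i ^ n) :
    Nat.card ι * Nat.card {x : G // x ^ n = 1} ≤ Nat.card G := by
  let φ : G →* G := powMonoidHom n
  calc Nat.card ι * Nat.card φ.ker
      ≤ Nat.card φ.range * Nat.card φ.ker :=
        Nat.mul_le_mul_right _ <| Nat.card_le_card_of_injective (fun i => ⟨u i ^ n, u i, rfl⟩)
          fun i j h => hu (congrArg Subtype.val h)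
    _ = Nat.card G := by rw [← Subgroup.index_ker, mul_comm, φ.ker.card_mul_index]

theorem Ideal.mem_nonZeroDivisors_of_span_singleton_eq_mul {R : Type*} [CommRing R] [IsDomain R]
    {r : R} (hr : r ≠ 0) {I J : Ideal R} (h : span {r} = I * J) : I ∈ (Ideal R)⁰ := by
  have : I * J ≠ 0 := by rwa [← h, Ne, zero_eq_bot, span_singleton_eq_bot]
  exact mem_nonZeroDivisors_of_ne_zero (left_ne_zero_of_mul this)

theorem ClassGroup.isPrincipal_pow_mul_of_mk0_pow_eq {R : Type*} [CommRing R] [IsDedekindDomain R]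
    {I J J' : (Ideal R)⁰} (hJ : (J * J' : Ideal R).IsPrincipal) {n : ℕ}
    (h : ClassGroup.mk0 I ^ n = ClassGroup.mk0 J ^ n) : ((I * J' : Ideal R) ^ n).IsPrincipal := by
  have hJJ' : ClassGroup.mk0 J * ClassGroup.mk0 J' = 1 := by
    rw [← map_mul, ClassGroup.mk0_eq_one_iff]
    exact hJ
  have : ClassGroup.mk0 ((I * J') ^ n) = 1 := by
    rw [map_pow, map_mul, mul_pow, h, ← mul_pow, hJJ', one_pow]
  have := (ClassGroup.mk0_eq_one_iff (SetLike.coe_mem ((I * J') ^ n))).mp this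
  rwa [SubmonoidClass.coe_pow, Submonoid.coe_mul] at this

theorem Nat.not_isSquare_mul_pow {p q ℓ : ℕ} (hp : p.Prime) (hq : q.Prime) (hpq : p ≠ q)
    (hℓ : Odd ℓ) : ¬ IsSquare ((p * q) ^ ℓ) := by
  rintro ⟨r, hr⟩
  have hpℓ : ((p * q) ^ ℓ).factorization p = ℓ := by
    simp [Nat.factorization_mul hp.ne_zero hq.ne_zero, hp.factorization, hq.factorization, hpq.symm]
  have hr2 : (r * r).factorization p = 2 * r.factorization p := by
    simp [← sq, Nat.factorization_pow]
  rw [hr, hr2] at hpℓ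
  obtain ⟨k, rfl⟩ := hℓ
  omega

theorem four_mul_pow_mul_lt {D x y : ℝ} {ℓ : ℕ} (hD : 0 < D) (hℓ : ℓ ≠ 0) (hx : 0 ≤ x) (hy : 0 ≤ y)
    (hxD : x < 1 / 4 * D ^ ((1 : ℝ) / (2 * ℓ))) (hyD : y < 1 / 4 * D ^ ((1 : ℝ) / (2 * ℓ))) :
    4 * (x * y) ^ ℓ < D := by
  set c := D ^ ((1 : ℝ) / (2 * ℓ))
  have hc : (c ^ 2) ^ ℓ = D := by
    rw [← pow_mul, ← Real.rpow_natCast, ← Real.rpow_mul hD.le, Nat.cast_mul, Nat.cast_ofNat,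
      one_div_mul_cancel (by positivity), Real.rpow_one]
  calc 4 * (x * y) ^ ℓ < 4 * (c ^ 2 / 16) ^ ℓ := by gcongr; nlinarith
    _ = 4 * D / 16 ^ ℓ := by rw [div_pow, hc, mul_div_assoc]
    _ ≤ 4 * D / 16 := by gcongr; exact le_self_pow₀ (by norm_num) hℓ
    _ < D := by linarith

theorem Algebra.discr_one_pair {A B : Type*} [CommRing A] [CommRing B] [Algebra A B] (x : B) :
    Algebra.discr A ![1, x] =
      Algebra.trace A B 1 * Algebra.trace A B (x * x) - Algebra.trace A B x ^ 2 := by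
  rw [Algebra.discr_def, Matrix.det_fin_two]
  simp [sq]

theorem mem_range_of_im_eq_zero {K : Type*} [Field K] [Algebra ℚ K] {ψ : K →+* ℂ}
    (hψ : ∀ x, (Algebra.trace ℚ K x : ℝ) = 2 * (ψ x).re) {x : K} (hx : (ψ x).im = 0) :
    x ∈ (algebraMap ℚ K).range := by
  refine ⟨Algebra.trace ℚ K x / 2, ψ.injective (Complex.ext ?_ ?_)⟩
  · rw [eq_ratCast, map_ratCast, Complex.ratCast_re, Rat.cast_div, hψ]
    push_cast; ring
  · rw [eq_ratCast, map_ratCast, Complex.ratCast_im, hx]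

section NumberField

variable {K : Type*} [Field K] [NumberField K]

theorem absNorm_eq_of_span_natCast_eq_mul (hK : finrank ℚ K = 2) {p : ℕ} (hp : p.Prime)
    {P Q : Ideal (𝓞 K)} (hP : P ≠ ⊤) (hQ : Q ≠ ⊤) (h : span {(p : 𝓞 K)} = P * Q) :
    absNorm P = p := by
  have hPQ : absNorm P * absNorm Q = p ^ 2 := by
    rw [← map_mul, ← h, absNorm_span_singleton, ← map_natCast (algebraMap ℤ (𝓞 K)),
      Algebra.norm_algebraMap, RingOfIntegers.rank, hK, Int.natAbs_pow, Int.natAbs_natCast]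
  exact ((hp.mul_eq_prime_sq_iff (absNorm_eq_one_iff.not.mpr hP)
    (absNorm_eq_one_iff.not.mpr hQ)).mp hPQ).1

theorem exists_discr_eq_sq_mul_discr {ι : Type*} [Fintype ι] [DecidableEq ι]
    (hι : Fintype.card ι = finrank ℚ K) (b : ι → 𝓞 K) :
    ∃ m : ℤ, Algebra.discr ℤ b = m ^ 2 * discr K := by
  let B := (RingOfIntegers.basis K).reindex <| Fintype.equivOfCardEq (β := ι) <| by
    rw [hι, ← RingOfIntegers.rank, finrank_eq_card_basis (RingOfIntegers.basis K)]
  refine ⟨(B.toMatrix b).det, ?_⟩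
  conv_lhs => rw [← B.toMatrix_map_vecMul b]
  rw [Algebra.discr_of_matrix_vecMul, discr_eq_discr K B]

theorem exists_embedding_trace_norm (hK : finrank ℚ K = 2) (hIm : IsEmpty (K →+* ℝ)) :
    ∃ ψ : K →+* ℂ, ∀ x : K, (Algebra.trace ℚ K x : ℝ) = 2 * (ψ x).re ∧
      (Algebra.norm ℚ x : ℝ) = Complex.normSq (ψ x) := by
  classical
  have hcard : Fintype.card (K →ₐ[ℚ] ℂ) = 2 := by rw [AlgHom.card, hK]
  obtain ⟨ψ⟩ : Nonempty (K →ₐ[ℚ] ℂ) := Fintype.card_pos_iff.mp (by omega)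
  let τ : K →ₐ[ℚ] ℂ := ((starRingEnd ℂ).comp ψ.toRingHom).toRatAlgHom
  have hne : ψ ≠ τ := fun h => hIm.false <| ComplexEmbedding.IsReal.embedding
    (φ := ψ.toRingHom) <| RingHom.ext fun x => (congrArg (· x) h).symm
  have huniv : (Finset.univ : Finset (K →ₐ[ℚ] ℂ)) = {ψ, τ} :=
    (Finset.eq_univ_of_card _ (by rw [Finset.card_pair hne, hcard])).symm
  refine ⟨ψ, fun x => ⟨Complex.ofReal_injective ?_, Complex.ofReal_injective ?_⟩⟩
  · have := trace_eq_sum_embeddings (K := ℚ) ℂ (x := x)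
    rw [huniv, Finset.sum_pair hne] at this
    rw [← Complex.add_conj, Complex.ofReal_ratCast, ← eq_ratCast (algebraMap ℚ ℂ)]
    exact this
  · have := Algebra.norm_eq_prod_embeddings ℚ ℂ x
    rw [huniv, Finset.prod_pair hne] at this
    rw [← Complex.mul_conj, Complex.ofReal_ratCast, ← eq_ratCast (algebraMap ℚ ℂ)]
    exact this

theorem norm_int_nonneg (hK : finrank ℚ K = 2) (hIm : IsEmpty (K →+* ℝ)) (α : 𝓞 K) :
    0 ≤ Algebra.norm ℤ α := by
  obtain ⟨ψ, hψ⟩ := exists_embedding_trace_norm hK hIm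
  have : (0 : ℝ) ≤ ((Algebra.norm ℤ α : ℚ) : ℝ) := by
    rw [Algebra.coe_norm_int, (hψ α).2]
    exact Complex.normSq_nonneg _
  exact_mod_cast this

theorem isSquare_norm_or_abs_discr_le (hK : finrank ℚ K = 2) (hIm : IsEmpty (K →+* ℝ))
    (α : 𝓞 K) : IsSquare (Algebra.norm ℤ α) ∨ |discr K| ≤ 4 * Algebra.norm ℤ α := by
  by_cases hrat : (α : K) ∈ (algebraMap ℚ K).range
  · obtain ⟨r, hr⟩ := hrat
    left
    rw [← Rat.isSquare_intCast_iff, Algebra.coe_norm_int, ← hr, Algebra.norm_algebraMap, hK]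
    exact ⟨r, sq r⟩
  right
  obtain ⟨ψ, hψ⟩ := exists_embedding_trace_norm hK hIm
  have htrace (x : 𝓞 K) : (Algebra.trace ℤ (𝓞 K) x : ℝ) = 2 * (ψ x).re := by
    rw [← Rat.cast_intCast, Algebra.coe_trace_int, (hψ x).1]
  have hnorm : (Algebra.norm ℤ α : ℝ) = Complex.normSq (ψ α) := by
    rw [← Rat.cast_intCast, Algebra.coe_norm_int, (hψ α).2]
  have hdiscr : (Algebra.discr ℤ ![1, α] : ℝ) = -4 * (ψ α).im ^ 2 := by
    push_cast [Algebra.discr_one_pair, htrace]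
    simp only [map_one, map_mul, Complex.one_re, Complex.mul_re]
    ring
  obtain ⟨m, hm⟩ := exists_discr_eq_sq_mul_discr (by simp [hK]) ![1, α]
  have him : (ψ α).im ≠ 0 := fun h => hrat (mem_range_of_im_eq_zero (fun x => (hψ x).1) h)
  have hm0 : m ≠ 0 := by
    rintro rfl
    rw [hm] at hdiscr
    push_cast at hdiscr
    exact him (pow_eq_zero_iff two_ne_zero |>.mp (by linarith))
  have hm1 : (1 : ℝ) ≤ m ^ 2 := by
    exact_mod_cast (one_le_sq_iff_one_le_abs m).mpr (Int.one_le_abs hm0)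
  suffices |(discr K : ℝ)| ≤ 4 * Complex.normSq (ψ α) by rw [← hnorm] at this; exact_mod_cast this
  calc |(discr K : ℝ)| ≤ m ^ 2 * |(discr K : ℝ)| := le_mul_of_one_le_left (abs_nonneg _) hm1
    _ = |(Algebra.discr ℤ ![1, α] : ℝ)| := by rw [hm]; push_cast; rw [abs_mul, abs_sq]
    _ = 4 * (ψ α).im ^ 2 := by rw [hdiscr, abs_of_nonpos (by nlinarith)]; ring
    _ ≤ 4 * Complex.normSq (ψ α) := by rw [Complex.normSq_apply]; nlinarith

theorem not_isPrincipal_of_absNorm (hK : finrank ℚ K = 2) (hIm : IsEmpty (K →+* ℝ))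
    {I : Ideal (𝓞 K)} (hsq : ¬ IsSquare (absNorm I)) (hlt : 4 * (absNorm I : ℤ) < |discr K|) :
    ¬ I.IsPrincipal := by
  rintro ⟨α, hα⟩
  change I = span {α} at hα
  subst hα
  have hN : (absNorm (span {α}) : ℤ) = Algebra.norm ℤ α := by
    rw [absNorm_span_singleton, Int.natCast_natAbs, abs_of_nonneg (norm_int_nonneg hK hIm α)]
  rcases isSquare_norm_or_abs_discr_le hK hIm α with h | h
  · exact hsq (Int.isSquare_natCast_iff.mp (hN ▸ h))
  · omega

theorem mk0_pow_ne_mk0_pow_of_absNorm (hK : finrank ℚ K = 2) (hIm : IsEmpty (K →+* ℝ)) {ℓ : ℕ}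
    (hℓ : Odd ℓ) {p q : ℕ} (hp : p.Prime) (hq : q.Prime) (hpq : p ≠ q)
    (hlt : 4 * ((p * q) ^ ℓ : ℤ) < |discr K|) {P Q Q' : (Ideal (𝓞 K))⁰}
    (hP : absNorm (P : Ideal (𝓞 K)) = p) (hQ' : absNorm (Q' : Ideal (𝓞 K)) = q)
    (hQQ' : (Q * Q' : Ideal (𝓞 K)).IsPrincipal) :
    ClassGroup.mk0 P ^ ℓ ≠ ClassGroup.mk0 Q ^ ℓ := by
  intro h
  have hnorm : absNorm ((P * Q' : Ideal (𝓞 K)) ^ ℓ) = (p * q) ^ ℓ := by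
    rw [map_pow, map_mul, hP, hQ']
  have hsq : ¬ IsSquare (absNorm ((P * Q' : Ideal (𝓞 K)) ^ ℓ)) := by
    rw [hnorm]
    exact Nat.not_isSquare_mul_pow hp hq hpq hℓ
  have hlt' : 4 * (absNorm ((P * Q' : Ideal (𝓞 K)) ^ ℓ) : ℤ) < |discr K| := by
    rw [hnorm]
    exact_mod_cast hlt
  exact not_isPrincipal_of_absNorm hK hIm hsq hlt'
    (ClassGroup.isPrincipal_pow_mul_of_mk0_pow_eq hQQ' h)

end NumberField

theorem small_split_primes_bound_torsion_general
    (K : IntermediateField ℚ (AlgebraicClosure ℚ))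
    (hK : Module.finrank ℚ K = 2) (hIm : IsEmpty (K →+* ℝ))
    (ℓ : ℕ) (hodd : Odd ℓ)
    (M : ℕ) (p : Fin M → ℕ) (hinj : Function.Injective p)
    (hprime : ∀ j, (p j).Prime)
    (hsmall : ∀ j, (p j : ℝ) < (1 / 4) * (absDisc K : ℝ) ^ ((1 : ℝ) / (2 * ℓ)))
    (hsplit : ∀ j, ∃ P Q : Ideal (𝓞 K), P ≠ Q ∧ P.IsPrime ∧ Q.IsPrime ∧
      Ideal.span {((p j : ℕ) : 𝓞 K)} = P * Q) :
    M * clTors K ℓ ≤ Nat.card (ClassGroup (𝓞 K)) := by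
  have hfin : FiniteDimensional ℚ K := Module.finite_of_finrank_pos (by omega)
  let _ : NumberField K := { to_charZero := inferInstance, to_finiteDimensional := hfin }
  have hD : (absDisc K : ℤ) = |discr K| := by rw [absDisc, dif_pos hfin, Int.natCast_natAbs]
  have hDpos : (0 : ℝ) < absDisc K := by
    exact_mod_cast (hD ▸ abs_pos.mpr (discr_ne_zero K) : (0 : ℤ) < absDisc K)
  choose P Q _ hP hQ hPQ using hsplit
  have hp0 (j) : (p j : 𝓞 K) ≠ 0 := by exact_mod_cast (hprime j).ne_zero
  have hQP (j) : span {(p j : 𝓞 K)} = Q j * P j := (hPQ j).trans (mul_comm _ _)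
  let 𝔭 (j) : (Ideal (𝓞 K))⁰ := ⟨P j, mem_nonZeroDivisors_of_span_singleton_eq_mul (hp0 j) (hPQ j)⟩
  let 𝔭' (j) : (Ideal (𝓞 K))⁰ := ⟨Q j, mem_nonZeroDivisors_of_span_singleton_eq_mul (hp0 j) (hQP j)⟩
  rw [← Nat.card_fin M]
  refine card_mul_card_pow_eq_one_le (fun j => ClassGroup.mk0 (𝔭 j)) fun i j hij => ?_
  by_contra hne
  have hlt : 4 * ((p i * p j) ^ ℓ : ℤ) < |discr K| := by
    rw [← hD]
    exact_mod_cast four_mul_pow_mul_lt hDpos hodd.pos.ne' (Nat.cast_nonneg _) (Nat.cast_nonneg _)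
      (hsmall i) (hsmall j)
  exact mk0_pow_ne_mk0_pow_of_absNorm hK hIm hodd (hprime i) (hprime j) (hinj.ne hne) hlt
    (P := 𝔭 i) (Q := 𝔭 j) (Q' := 𝔭' j)
    (absNorm_eq_of_span_natCast_eq_mul hK (hprime i) (hP i).ne_top (hQ i).ne_top (hPQ i))
    (absNorm_eq_of_span_natCast_eq_mul hK (hprime j) (hQ j).ne_top (hP j).ne_top (hQP j))
    ⟨⟨_, (hPQ j).symm⟩⟩ hij

/-- If `K` is an imaginary quadratic field of absolute discriminant `D`,
`ℓ` an odd prime, and `p_1, …, p_M` are distinct primes not dividing `2D`, each smaller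
than `(1/4)·D^{1/(2ℓ)}` and split in `K`, then `M · |Cl_K[ℓ]| ≤ |Cl_K|`. -/
theorem small_split_primes_bound_torsion
    (K : IntermediateField ℚ (AlgebraicClosure ℚ))
    (hK : Module.finrank ℚ K = 2) (hIm : IsEmpty (K →+* ℝ))
    (ℓ : ℕ) (hℓ : ℓ.Prime) (hodd : Odd ℓ)
    (M : ℕ) (p : Fin M → ℕ) (hinj : Function.Injective p)
    (hprime : ∀ j, (p j).Prime)
    (hndvd : ∀ j, ¬ (p j ∣ 2 * absDisc K))
    (hsmall : ∀ j, (p j : ℝ) < (1 / 4) * (absDisc K : ℝ) ^ ((1 : ℝ) / (2 * ℓ)))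
    (hsplit : ∀ j, ∃ P Q : Ideal (𝓞 K), P ≠ Q ∧ P.IsPrime ∧ Q.IsPrime ∧
      Ideal.span {((p j : ℕ) : 𝓞 K)} = P * Q) :
    M * clTors K ℓ ≤ Nat.card (ClassGroup (𝓞 K)) :=
  small_split_primes_bound_torsion_general K hK hIm ℓ hodd M p hinj hprime hsmall hsplit
end

section
/- Let A be a finite abelian group (written additively), let ℓ be a prime, and let k, k' be integers with 1 ≤ k ≤ k'. Then |A[ℓ^{k'}]|^{k} ≤ |A[ℓ^{k}]|^{k'} (equivalently, |A[ℓ^{k'}]| ≤ |A[ℓ^{k}]|^{k'/k}). -/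
open Finset

private def smulHom (A : Type*) [AddCommGroup A] (n : ℕ) : A →+ A :=
  AddMonoidHom.mk' (fun x => n • x) (fun a b => smul_add n a b)

private lemma smulHom_apply {A : Type*} [AddCommGroup A] (n : ℕ) (x : A) :
    smulHom A n x = n • x := rfl

/-- torsion subgroup A[ℓ^i] -/
private def Tor (A : Type*) [AddCommGroup A] (ℓ i : ℕ) : AddSubgroup A :=
  (smulHom A (ℓ ^ i)).ker

private lemma mem_Tor {A : Type*} [AddCommGroup A] {ℓ i : ℕ} {x : A} :
    x ∈ Tor A ℓ i ↔ ℓ ^ i • x = 0 := Iff.rfl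

/-- the "layer" subgroup ℓ^i A ∩ A[ℓ] -/
private def Lay (A : Type*) [AddCommGroup A] (ℓ i : ℕ) : AddSubgroup A :=
  (smulHom A (ℓ ^ i)).range ⊓ (smulHom A ℓ).ker

private lemma Tor_mono {A : Type*} [AddCommGroup A] (ℓ i : ℕ) :
    Tor A ℓ i ≤ Tor A ℓ (i + 1) := by
  intro x hx
  rw [mem_Tor] at hx ⊢
  rw [pow_succ', mul_smul, hx, smul_zero]

private lemma card_Tor_succ (A : Type*) [AddCommGroup A] [Finite A] (ℓ i : ℕ) :
    Nat.card (Tor A ℓ (i + 1)) = Nat.card (Tor A ℓ i) * Nat.card (Lay A ℓ i) := by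
  set ψ : (Tor A ℓ (i + 1)) →+ A := (smulHom A (ℓ ^ i)).comp (Tor A ℓ (i + 1)).subtype with hψ
  have hker : ψ.ker = (Tor A ℓ i).addSubgroupOf (Tor A ℓ (i + 1)) := by
    ext x
    simp [hψ, AddMonoidHom.mem_ker, AddSubgroup.mem_addSubgroupOf, mem_Tor, smulHom_apply]
  have hrange : ψ.range = Lay A ℓ i := by
    ext y
    constructor
    · rintro ⟨⟨x, hx⟩, rfl⟩
      rw [mem_Tor] at hx
      refine ⟨⟨x, rfl⟩, ?_⟩
      show ℓ • (ℓ ^ i • x) = 0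
      rw [smul_smul, ← pow_succ', hx]
    · rintro ⟨⟨x, rfl⟩, hy⟩
      have hx : x ∈ Tor A ℓ (i + 1) := by
        rw [mem_Tor, pow_succ', mul_smul]
        exact hy
      exact ⟨⟨x, hx⟩, rfl⟩
  calc Nat.card (Tor A ℓ (i + 1))
      = Nat.card ((Tor A ℓ (i + 1)) ⧸ ψ.ker) * Nat.card ψ.ker :=
        AddSubgroup.card_eq_card_quotient_mul_card_addSubgroup ψ.ker
    _ = Nat.card ψ.range * Nat.card ψ.ker := by
        rw [Nat.card_congr (QuotientAddGroup.quotientKerEquivRange ψ).toEquiv]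
    _ = Nat.card (Tor A ℓ i) * Nat.card (Lay A ℓ i) := by
        rw [hker, hrange,
          Nat.card_congr (AddSubgroup.addSubgroupOfEquivOfLe (Tor_mono ℓ i)).toEquiv,
          mul_comm]

private lemma Lay_anti {A : Type*} [AddCommGroup A] (ℓ : ℕ) {i j : ℕ} (h : i ≤ j) :
    Lay A ℓ j ≤ Lay A ℓ i := by
  refine inf_le_inf_right _ ?_
  rintro y ⟨x, rfl⟩
  exact ⟨ℓ ^ (j - i) • x, by
    rw [smulHom_apply, smulHom_apply, smul_smul, ← pow_add, Nat.add_sub_cancel' h]⟩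

private lemma card_Tor_eq_prod (A : Type*) [AddCommGroup A] [Finite A] (ℓ k : ℕ) :
    Nat.card (Tor A ℓ k) = ∏ j ∈ range k, Nat.card (Lay A ℓ j) := by
  induction k with
  | zero =>
      simp only [range_zero, prod_empty]
      have : Tor A ℓ 0 = ⊥ := by
        ext x; simp [mem_Tor]
      rw [this, AddSubgroup.card_bot]
  | succ n ih =>
      rw [card_Tor_succ, ih, prod_range_succ]

/-- For a finite abelian group `A`, a prime `ℓ` and integers
`1 ≤ k ≤ k'`, one has `|A[ℓ^{k'}]|^k ≤ |A[ℓ^k]|^{k'}`. -/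
theorem prime_power_torsion_card_le
    (A : Type*) [AddCommGroup A] [Finite A]
    (ℓ : ℕ) (hℓ : ℓ.Prime) (k k' : ℕ) (hk : 1 ≤ k) (hkk' : k ≤ k') :
    Nat.card {x : A // ℓ ^ k' • x = 0} ^ k ≤ Nat.card {x : A // ℓ ^ k • x = 0} ^ k' := by
  have hcard : ∀ m : ℕ, Nat.card {x : A // ℓ ^ m • x = 0} = Nat.card (Tor A ℓ m) := by
    intro m; rfl
  rw [hcard, hcard, card_Tor_eq_prod, card_Tor_eq_prod]
  set g : ℕ → ℕ := fun j => Nat.card (Lay A ℓ j) with hg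
  have hganti : ∀ i j : ℕ, i ≤ j → g j ≤ g i := fun i j h =>
    AddSubgroup.card_le_of_le (Lay_anti ℓ h)
  set P : ℕ := ∏ j ∈ range k, g j with hP
  have hsplit : ∏ j ∈ range k', g j = P * ∏ j ∈ Ico k k', g j := by
    rw [hP, Finset.prod_range_mul_prod_Ico g hkk']
  have h1 : ∏ j ∈ Ico k k', g j ≤ g (k - 1) ^ (k' - k) := by
    have := Finset.prod_le_pow_card (Ico k k') g (g (k - 1))
      (fun x hx => hganti (k - 1) x (by simp at hx; omega))
    simpa [Nat.card_Ico] using this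
  have h2 : g (k - 1) ^ k ≤ P := by
    calc g (k - 1) ^ k = ∏ _j ∈ range k, g (k - 1) := by
          rw [prod_const, card_range]
      _ ≤ P := Finset.prod_le_prod' (fun j hj => hganti j (k - 1) (by simp at hj; omega))
  calc (∏ j ∈ range k', g j) ^ k = P ^ k * (∏ j ∈ Ico k k', g j) ^ k := by
        rw [hsplit, mul_pow]
    _ ≤ P ^ k * (g (k - 1) ^ (k' - k)) ^ k :=
        Nat.mul_le_mul_left _ (Nat.pow_le_pow_left h1 k)
    _ = P ^ k * (g (k - 1) ^ k) ^ (k' - k) := by ring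
    _ ≤ P ^ k * P ^ (k' - k) := Nat.mul_le_mul_left _ (Nat.pow_le_pow_left h2 _)
    _ = P ^ k' := by rw [← pow_add]; congr 1; omega
end
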